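/- arXiv:2502.17686 — 2 statements merged into one kernel-verified Lean document; each statement's English description precedes it below -/
import Mathlib

section
/- Let H be a connected component (not isomorphic to K_5^{(3)}) of a Berge-K_{1,5}-saturated 3-uniform hypergraph. If every vertex v of H satisfies |N(v)| ≤ 4, then every vertex of H has degree at most 4 (equivalently, degree deficiency ddf(v) = 6 − d(v) ≥ 2). -/
open Finset

variable {V : Type} [DecidableEq V]

/-- A hypergraph (given by its edge set) is 3-uniform. -/
def Uniform3 (E : Finset (Finset V)) : Prop := ∀ e ∈ E, e.card = 3

/-- There is a Berge star `K_{1,m}` centered at `v`: `m` distinct leaves `y i`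
and `m` distinct hyperedges `f i` with `{v, y i} ⊆ f i`. -/
def IsBergeStar (E : Finset (Finset V)) (v : V) (m : ℕ) : Prop :=
  ∃ (y : Fin m → V) (f : Fin m → Finset V),
    Function.Injective y ∧ Function.Injective f ∧
    ∀ i, f i ∈ E ∧ v ∈ f i ∧ y i ∈ f i ∧ y i ≠ v

/-- The Berge degree of `v`: the largest `m` such that a Berge star `K_{1,m}`
centered at `v` exists. -/
noncomputable def bergeDeg (E : Finset (Finset V)) (v : V) : ℕ :=
  sSup {m | IsBergeStar E v m}

/-- The degree of `v`: the number of hyperedges containing `v`. -/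
def hdeg (E : Finset (Finset V)) (v : V) : ℕ := (E.filter (fun e => v ∈ e)).card

/-- The neighborhood of `v`: vertices sharing an edge with `v`. -/
def nbr (E : Finset (Finset V)) (v : V) : Finset V :=
  ((E.filter (fun e => v ∈ e)).biUnion id).erase v

/-- `E` contains no Berge star `K_{1,ℓ}`. -/
def BergeFree (E : Finset (Finset V)) (ℓ : ℕ) : Prop := ∀ v, ¬ IsBergeStar E v ℓ

/-- `E` is Berge-`K_{1,ℓ}`-saturated. -/
def Saturated3 (E : Finset (Finset V)) (ℓ : ℕ) : Prop :=
  BergeFree E ℓ ∧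
  ∀ e : Finset V, e.card = 3 → e ∉ E → ∃ w, IsBergeStar (insert e E) w ℓ

/-- The 2-graph skeleton of a hypergraph: `x ~ y` iff some hyperedge contains both. -/
def skeleton (E : Finset (Finset V)) : SimpleGraph V :=
  SimpleGraph.fromRel (fun x y => ∃ e ∈ E, x ∈ e ∧ y ∈ e)

lemma mem_nbr {E : Finset (Finset V)} {v x : V} :
    x ∈ nbr E v ↔ x ≠ v ∧ ∃ e ∈ E, v ∈ e ∧ x ∈ e := by
  simp only [nbr, Finset.mem_erase, Finset.mem_biUnion, Finset.mem_filter, id]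
  tauto

lemma nbr_symm {E : Finset (Finset V)} {v x : V} (h : x ∈ nbr E v) : v ∈ nbr E x := by
  rw [mem_nbr] at h ⊢
  obtain ⟨hne, e, he, hv, hx⟩ := h
  exact ⟨fun h => hne h.symm, e, he, hx, hv⟩

lemma sat_consequence {E : Finset (Finset V)} {e : Finset V} {w : V}
    (hfree : BergeFree E 5) (hstar : IsBergeStar (insert e E) w 5)
    (hb : ∀ w' ∈ e, (nbr E w').card ≤ 4) :
    w ∈ e ∧ ∃ y ∈ e, y ≠ w ∧ y ∉ nbr E w ∧ (nbr E w).card = 4 := by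
  obtain ⟨y, f, hyinj, hfinj, hprop⟩ := hstar
  have hex : ∃ i0, f i0 = e := by
    by_contra h
    push_neg at h
    exact hfree w ⟨y, f, hyinj, hfinj, fun i => by
      obtain ⟨h1, h2, h3, h4⟩ := hprop i
      rcases Finset.mem_insert.mp h1 with hh | hh
      · exact absurd hh (h i)
      · exact ⟨hh, h2, h3, h4⟩⟩
  obtain ⟨i0, hi0⟩ := hex
  have hwe : w ∈ e := hi0 ▸ (hprop i0).2.1
  have hye : y i0 ∈ e := hi0 ▸ (hprop i0).2.2.1
  have hbw := hb w hwe
  set s : Finset V := (Finset.univ.erase i0).image y with hs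
  have hscard : s.card = 4 := by
    rw [hs, Finset.card_image_of_injective _ hyinj, Finset.card_erase_of_mem (Finset.mem_univ _)]
    simp
  have hssub : s ⊆ nbr E w := by
    intro x hx
    rw [hs, Finset.mem_image] at hx
    obtain ⟨i, hi, rfl⟩ := hx
    have hine : i ≠ i0 := (Finset.mem_erase.mp hi).1
    obtain ⟨h1, h2, h3, h4⟩ := hprop i
    have hfiE : f i ∈ E := by
      rcases Finset.mem_insert.mp h1 with hh | hh
      · exact absurd (hfinj (hh.trans hi0.symm)) hine
      · exact hh
    exact mem_nbr.mpr ⟨h4, f i, hfiE, h2, h3⟩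
  have heq : s = nbr E w := Finset.eq_of_subset_of_card_le hssub (by omega)
  have hy0 : y i0 ∉ s := by
    rw [hs, Finset.mem_image]
    rintro ⟨i, hi, hyi⟩
    exact (Finset.mem_erase.mp hi).1 (hyinj hyi)
  exact ⟨hwe, y i0, hye, (hprop i0).2.2.2, heq ▸ hy0, heq ▸ hscard⟩

theorem stmt12 (E : Finset (Finset V)) (hU : Uniform3 E) (hsat : Saturated3 E 5)
    (S : Finset V)
    (hclosed : ∀ e ∈ E, (∃ x ∈ e, x ∈ S) → e ⊆ S)
    (hconn : ∀ x ∈ S, ∀ y ∈ S, (skeleton E).Reachable x y)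
    (hnotK5 : ¬ (S.card = 5 ∧ ∀ e : Finset V, e ⊆ S → e.card = 3 → e ∈ E))
    (hnbr : ∀ v ∈ S, (nbr E v).card ≤ 4) :
    ∀ v ∈ S, hdeg E v ≤ 4 := by
  intro v hv
  by_contra hcon
  have hd : 5 ≤ hdeg E v := by omega
  set N : Finset V := nbr E v with hN
  set T : Finset V := insert v N with hT
  have hvN : v ∉ N := by
    intro h
    exact (mem_nbr.mp h).1 rfl
  have hNS : N ⊆ S := by
    intro x hx
    obtain ⟨hne, g, hg, hvg, hxg⟩ := mem_nbr.mp hx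
    exact hclosed g hg ⟨v, hvg, hv⟩ hxg
  have hTS : T ⊆ S := by
    rw [hT]
    exact Finset.insert_subset hv hNS
  -- the pairs through v
  set P : Finset (Finset V) := (E.filter (fun e => v ∈ e)).image (fun e => e.erase v) with hP
  have hPcard : 5 ≤ P.card := by
    rw [hP, Finset.card_image_of_injOn]
    · exact hd
    · intro e1 h1 e2 h2 h12
      have hv1 : v ∈ e1 := (Finset.mem_filter.mp h1).2
      have hv2 : v ∈ e2 := (Finset.mem_filter.mp h2).2
      rw [← Finset.insert_erase hv1, ← Finset.insert_erase hv2]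
      exact congrArg (insert v) h12
  have hPsub : P ⊆ N.powersetCard 2 := by
    intro p hp
    rw [hP, Finset.mem_image] at hp
    obtain ⟨g, hg, rfl⟩ := hp
    obtain ⟨hgE, hvg⟩ := Finset.mem_filter.mp hg
    rw [Finset.mem_powersetCard]
    constructor
    · intro x hx
      obtain ⟨hxv, hxg⟩ := Finset.mem_erase.mp hx
      exact mem_nbr.mpr ⟨hxv, g, hgE, hvg, hxg⟩
    · rw [Finset.card_erase_of_mem hvg, hU g hgE]
  have hNle : N.card ≤ 4 := hnbr v hv
  have hN4 : N.card = 4 := by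
    have h1 : P.card ≤ (N.powersetCard 2).card := Finset.card_le_card hPsub
    rw [Finset.card_powersetCard] at h1
    interval_cases h : N.card <;> simp_all <;> omega
  -- key claim: every triple inside T is an edge
  have hkey : ∀ e ⊆ T, e.card = 3 → e ∈ E := by
    intro e hesub hecard
    by_contra heE
    obtain ⟨w, hstar⟩ := hsat.2 e hecard heE
    have hb : ∀ w' ∈ e, (nbr E w').card ≤ 4 := fun w' hw' => hnbr w' (hTS (hesub hw'))
    obtain ⟨hwe, y0, hy0e, hy0w, hy0nbr, hwcard⟩ := sat_consequence hsat.1 hstar hb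
    have hwv : w ≠ v := by
      rintro rfl
      have : y0 ∈ N := by
        rcases Finset.mem_insert.mp (hesub hy0e) with h | h
        · exact absurd h hy0w
        · exact h
      exact hy0nbr this
    have hyv : y0 ≠ v := by
      rintro rfl
      have hwN : w ∈ N := by
        rcases Finset.mem_insert.mp (hesub hwe) with h | h
        · exact absurd h hwv
        · exact h
      exact hy0nbr (nbr_symm hwN)
    have hwN : w ∈ N := by
      rcases Finset.mem_insert.mp (hesub hwe) with h | h
      · exact absurd h hwv
      · exact h
    have hyN : y0 ∈ N := by
      rcases Finset.mem_insert.mp (hesub hy0e) with h | h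
      · exact absurd h hyv
      · exact h
    -- the pair {w, y0} is not in P
    have hpairP : ({w, y0} : Finset V) ∉ P := by
      intro hmem
      rw [hP, Finset.mem_image] at hmem
      obtain ⟨g, hg, hge⟩ := hmem
      obtain ⟨hgE, hvg⟩ := Finset.mem_filter.mp hg
      have hwg : w ∈ g := Finset.erase_subset v g (hge ▸ Finset.mem_insert_self w {y0})
      have hyg : y0 ∈ g := Finset.erase_subset v g
        (hge ▸ Finset.mem_insert_of_mem (Finset.mem_singleton_self y0))
      exact hy0nbr (mem_nbr.mpr ⟨hy0w, g, hgE, hwg, hyg⟩)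
    have hpairmem : ({w, y0} : Finset V) ∈ N.powersetCard 2 := by
      rw [Finset.mem_powersetCard]
      exact ⟨Finset.insert_subset hwN (Finset.singleton_subset_iff.mpr hyN),
        Finset.card_pair (Ne.symm hy0w)⟩
    -- P is everything but {w, y0}
    have hPeq : P = N.powersetCard 2 \ {({w, y0} : Finset V)} := by
      apply Finset.eq_of_subset_of_card_le
      · intro p hp
        rw [Finset.mem_sdiff, Finset.mem_singleton]
        exact ⟨hPsub hp, fun h => hpairP (h ▸ hp)⟩
      · rw [Finset.card_sdiff_of_subset (Finset.singleton_subset_iff.mpr hpairmem),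
          Finset.card_powersetCard, hN4, Finset.card_singleton]
        have h6 : Nat.choose 4 2 = 6 := by decide
        omega
    have hpairE : ∀ α β : V, α ∈ N → β ∈ N → α ≠ β → ({α, β} : Finset V) ≠ {w, y0} →
        β ∈ nbr E α ∧ v ∈ nbr E α := by
      intro α β hα hβ hab hne
      have hmem : ({α, β} : Finset V) ∈ P := by
        rw [hPeq, Finset.mem_sdiff, Finset.mem_singleton]
        refine ⟨?_, hne⟩
        rw [Finset.mem_powersetCard]
        exact ⟨Finset.insert_subset hα (Finset.singleton_subset_iff.mpr hβ),
          Finset.card_pair hab⟩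
      rw [hP, Finset.mem_image] at hmem
      obtain ⟨g, hg, hge⟩ := hmem
      obtain ⟨hgE, hvg⟩ := Finset.mem_filter.mp hg
      have hag : α ∈ g := Finset.erase_subset v g (hge ▸ Finset.mem_insert_self α {β})
      have hbg : β ∈ g := Finset.erase_subset v g
        (hge ▸ Finset.mem_insert_of_mem (Finset.mem_singleton_self β))
      have hav : α ≠ v := (mem_nbr.mp hα).1
      exact ⟨mem_nbr.mpr ⟨hab.symm, g, hgE, hag, hbg⟩,
        mem_nbr.mpr ⟨fun h => hav h.symm, g, hgE, hag, hvg⟩⟩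
    -- the two other vertices of N
    have hsdcard : (N \ {w, y0}).card = 2 := by
      rw [Finset.card_sdiff_of_subset (Finset.insert_subset hwN (Finset.singleton_subset_iff.mpr hyN)),
        hN4, Finset.card_pair (Ne.symm hy0w)]
    obtain ⟨x1, x2, hx12, hsd⟩ := Finset.card_eq_two.mp hsdcard
    have hx1m : x1 ∈ N \ ({w, y0} : Finset V) := by rw [hsd]; exact Finset.mem_insert_self _ _
    have hx2m : x2 ∈ N \ ({w, y0} : Finset V) := by
      rw [hsd]; exact Finset.mem_insert_of_mem (Finset.mem_singleton_self _)
    obtain ⟨hx1N, hx1wy⟩ := Finset.mem_sdiff.mp hx1m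
    obtain ⟨hx2N, hx2wy⟩ := Finset.mem_sdiff.mp hx2m
    have hx1w : x1 ≠ w := fun h => hx1wy (h ▸ Finset.mem_insert_self _ _)
    have hx2w : x2 ≠ w := fun h => hx2wy (h ▸ Finset.mem_insert_self _ _)
    have hx1y : x1 ≠ y0 := fun h => hx1wy (h ▸ Finset.mem_insert_of_mem (Finset.mem_singleton_self _))
    have hx2y : x2 ≠ y0 := fun h => hx2wy (h ▸ Finset.mem_insert_of_mem (Finset.mem_singleton_self _))
    have hx1v : x1 ≠ v := (mem_nbr.mp hx1N).1
    have hx2v : x2 ≠ v := (mem_nbr.mp hx2N).1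
    -- pairs containing x1 or x2 are not {w,y0}
    have hne1 : ∀ β : V, ({x1, β} : Finset V) ≠ {w, y0} :=
      fun β h => hx1wy (h ▸ Finset.mem_insert_self x1 {β})
    have hne2 : ∀ β : V, ({x2, β} : Finset V) ≠ {w, y0} :=
      fun β h => hx2wy (h ▸ Finset.mem_insert_self x2 {β})
    have hne1' : ∀ α : V, ({α, x1} : Finset V) ≠ {w, y0} :=
      fun α h => hx1wy (h ▸ Finset.mem_insert_of_mem (Finset.mem_singleton_self x1))
    have hne2' : ∀ α : V, ({α, x2} : Finset V) ≠ {w, y0} :=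
      fun α h => hx2wy (h ▸ Finset.mem_insert_of_mem (Finset.mem_singleton_self x2))
    -- nbr w ⊇ {v, x1, x2}
    obtain ⟨hx1w', hvw'⟩ := hpairE w x1 hwN hx1N (Ne.symm hx1w) (hne1' w)
    obtain ⟨hx2w', _⟩ := hpairE w x2 hwN hx2N (Ne.symm hx2w) (hne2' w)
    -- find the fourth neighbor z of w
    have hzex : ∃ z ∈ nbr E w, z ∉ ({v, x1, x2} : Finset V) := by
      by_contra h
      push_neg at h
      have hsub : nbr E w ⊆ {v, x1, x2} := h
      have hc := Finset.card_le_card hsub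
      rw [hwcard] at hc
      have h3 : ({v, x1, x2} : Finset V).card ≤ 3 := by
        apply le_trans (Finset.card_insert_le _ _)
        have := Finset.card_insert_le x1 ({x2} : Finset V)
        simp only [Finset.card_singleton] at this
        omega
      omega
    obtain ⟨z, hznbr, hznot⟩ := hzex
    have hzv : z ≠ v := fun h => hznot (h ▸ Finset.mem_insert_self _ _)
    have hzx1 : z ≠ x1 := fun h => hznot (h ▸ Finset.mem_insert_of_mem (Finset.mem_insert_self _ _))
    have hzx2 : z ≠ x2 := fun h => hznot
      (h ▸ Finset.mem_insert_of_mem (Finset.mem_insert_of_mem (Finset.mem_singleton_self _)))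
    have hzw : z ≠ w := (mem_nbr.mp hznbr).1
    have hzy : z ≠ y0 := fun h => hy0nbr (h ▸ hznbr)
    -- nbr w = {v, x1, x2, z}
    have hnbrw : nbr E w = {v, x1, x2, z} := by
      symm
      apply Finset.eq_of_subset_of_card_le
      · intro t ht
        rcases Finset.mem_insert.mp ht with rfl | ht
        · exact hvw'
        rcases Finset.mem_insert.mp ht with rfl | ht
        · exact hx1w'
        rcases Finset.mem_insert.mp ht with rfl | ht
        · exact hx2w'
        · rw [Finset.mem_singleton] at ht; exact ht ▸ hznbr
      · rw [hwcard]
        rw [Finset.card_insert_of_notMem (by simp [Ne.symm hx1v, Ne.symm hx2v, Ne.symm hzv]),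
          Finset.card_insert_of_notMem (by simp [hx12, Ne.symm hzx1]),
          Finset.card_insert_of_notMem (by simp [Ne.symm hzx2]),
          Finset.card_singleton]
    -- edge g containing w and z
    obtain ⟨_, g, hgE, hwg, hzg⟩ := mem_nbr.mp hznbr
    have hgcard := hU g hgE
    have hwzsub : ({w, z} : Finset V) ⊆ g :=
      Finset.insert_subset hwg (Finset.singleton_subset_iff.mpr hzg)
    have hu : ∃ u ∈ g, u ≠ w ∧ u ≠ z := by
      have hc : (g \ {w, z}).card = 1 := by
        rw [Finset.card_sdiff_of_subset hwzsub, hgcard, Finset.card_pair (Ne.symm hzw)]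
      obtain ⟨u, hu⟩ := Finset.card_eq_one.mp hc
      have hum : u ∈ g \ ({w, z} : Finset V) := by rw [hu]; exact Finset.mem_singleton_self u
      obtain ⟨hug, hunot⟩ := Finset.mem_sdiff.mp hum
      exact ⟨u, hug, fun h => hunot (h ▸ Finset.mem_insert_self _ _),
        fun h => hunot (h ▸ Finset.mem_insert_of_mem (Finset.mem_singleton_self _))⟩
    obtain ⟨u, hug, huw, huz⟩ := hu
    have hunbr : u ∈ nbr E w := mem_nbr.mpr ⟨huw, g, hgE, hwg, hug⟩
    rw [hnbrw] at hunbr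
    have hzmem : ∀ t : V, t ∈ g → t ≠ z → z ∈ nbr E t :=
      fun t htg htz => mem_nbr.mpr ⟨fun h => htz h.symm, g, hgE, htg, hzg⟩
    rcases Finset.mem_insert.mp hunbr with huv | hunbr
    · -- u = v : then z ∈ N, impossible
      have hzN' : z ∈ N := mem_nbr.mpr ⟨hzv, g, hgE, huv ▸ hug, hzg⟩
      have hzsd : z ∈ N \ ({w, y0} : Finset V) :=
        Finset.mem_sdiff.mpr ⟨hzN', by simp [hzw, hzy]⟩
      rw [hsd] at hzsd
      rcases Finset.mem_insert.mp hzsd with h | h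
      · exact hzx1 h
      · exact hzx2 (Finset.mem_singleton.mp h)
    rcases Finset.mem_insert.mp hunbr with hux | hunbr
    · -- u = x1
      rw [hux] at hug
      obtain ⟨hwx1', hvx1'⟩ := hpairE x1 w hx1N hwN hx1w (hne1 w)
      obtain ⟨hx2x1', _⟩ := hpairE x1 x2 hx1N hx2N hx12 (hne1 x2)
      obtain ⟨hyx1', _⟩ := hpairE x1 y0 hx1N hyN hx1y (hne1 y0)
      have hnbrx1 : nbr E x1 = {v, w, x2, y0} := by
        symm
        apply Finset.eq_of_subset_of_card_le
        · intro t ht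
          rcases Finset.mem_insert.mp ht with rfl | ht
          · exact hvx1'
          rcases Finset.mem_insert.mp ht with rfl | ht
          · exact hwx1'
          rcases Finset.mem_insert.mp ht with rfl | ht
          · exact hx2x1'
          · rw [Finset.mem_singleton] at ht; exact ht ▸ hyx1'
        · have h4 : ({v, w, x2, y0} : Finset V).card = 4 := by
            rw [Finset.card_insert_of_notMem (by simp [Ne.symm hwv, Ne.symm hx2v, Ne.symm hyv]),
              Finset.card_insert_of_notMem (by simp [Ne.symm hx2w, Ne.symm hy0w]),
              Finset.card_insert_of_notMem (by simp [hx2y]),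
              Finset.card_singleton]
          rw [h4]
          exact hnbr x1 (hNS hx1N)
      have hz1 : z ∈ nbr E x1 := hzmem x1 hug (Ne.symm hzx1)
      rw [hnbrx1] at hz1
      simp only [Finset.mem_insert, Finset.mem_singleton] at hz1
      rcases hz1 with h | h | h | h
      · exact hzv h
      · exact hzw h
      · exact hzx2 h
      · exact hzy h
    rcases Finset.mem_insert.mp hunbr with hux | hux
    · -- u = x2
      rw [hux] at hug
      obtain ⟨hwx2', hvx2'⟩ := hpairE x2 w hx2N hwN hx2w (hne2 w)
      obtain ⟨hx1x2', _⟩ := hpairE x2 x1 hx2N hx1N (Ne.symm hx12) (hne2 x1)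
      obtain ⟨hyx2', _⟩ := hpairE x2 y0 hx2N hyN hx2y (hne2 y0)
      have hnbrx2 : nbr E x2 = {v, w, x1, y0} := by
        symm
        apply Finset.eq_of_subset_of_card_le
        · intro t ht
          rcases Finset.mem_insert.mp ht with rfl | ht
          · exact hvx2'
          rcases Finset.mem_insert.mp ht with rfl | ht
          · exact hwx2'
          rcases Finset.mem_insert.mp ht with rfl | ht
          · exact hx1x2'
          · rw [Finset.mem_singleton] at ht; exact ht ▸ hyx2'
        · have h4 : ({v, w, x1, y0} : Finset V).card = 4 := by
            rw [Finset.card_insert_of_notMem (by simp [Ne.symm hwv, Ne.symm hx1v, Ne.symm hyv]),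
              Finset.card_insert_of_notMem (by simp [Ne.symm hx1w, Ne.symm hy0w]),
              Finset.card_insert_of_notMem (by simp [hx1y]),
              Finset.card_singleton]
          rw [h4]
          exact hnbr x2 (hNS hx2N)
      have hz1 : z ∈ nbr E x2 := hzmem x2 hug (Ne.symm hzx2)
      rw [hnbrx2] at hz1
      simp only [Finset.mem_insert, Finset.mem_singleton] at hz1
      rcases hz1 with h | h | h | h
      · exact hzv h
      · exact hzw h
      · exact hzx1 h
      · exact hzy h
    · exact huz (Finset.mem_singleton.mp hux)
  -- final part: S = T is a K5
  have hTcard : T.card = 5 := by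
    rw [hT, Finset.card_insert_of_notMem hvN, hN4]
  have hnbrT : ∀ w ∈ T, nbr E w = T.erase w := by
    intro w hw
    symm
    apply Finset.eq_of_subset_of_card_le
    · intro x hx
      obtain ⟨hxw, hxT⟩ := Finset.mem_erase.mp hx
      have hsub : ({w, x} : Finset V) ⊆ T :=
        Finset.insert_subset hw (Finset.singleton_subset_iff.mpr hxT)
      have htc : (T \ ({w, x} : Finset V)).card = 3 := by
        rw [Finset.card_sdiff_of_subset hsub, hTcard, Finset.card_pair (fun h => hxw h.symm)]
      have htne : (T \ ({w, x} : Finset V)).Nonempty := by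
        rw [← Finset.card_pos, htc]; omega
      obtain ⟨t, htm⟩ := htne
      obtain ⟨htT, htnot⟩ := Finset.mem_sdiff.mp htm
      have htw : t ≠ w := fun h => htnot (h ▸ Finset.mem_insert_self _ _)
      have htx : t ≠ x := fun h => htnot (h ▸ Finset.mem_insert_of_mem (Finset.mem_singleton_self _))
      have hE3 : ({w, x, t} : Finset V) ∈ E := by
        apply hkey
        · exact Finset.insert_subset hw (Finset.insert_subset hxT
            (Finset.singleton_subset_iff.mpr htT))
        · rw [Finset.card_insert_of_notMem (by simp [Ne.symm hxw, Ne.symm htw]),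
            Finset.card_pair (Ne.symm htx)]
      exact mem_nbr.mpr ⟨hxw, {w, x, t}, hE3, Finset.mem_insert_self _ _,
        Finset.mem_insert_of_mem (Finset.mem_insert_self _ _)⟩
    · rw [Finset.card_erase_of_mem hw, hTcard]
      exact hnbr w (hTS hw)
  have hedgeT : ∀ g ∈ E, ∀ x ∈ g, x ∈ T → g ⊆ T := by
    intro g hg x hxg hxT t htg
    by_cases htx : t = x
    · exact htx ▸ hxT
    · have : t ∈ nbr E x := mem_nbr.mpr ⟨htx, g, hg, hxg, htg⟩
      rw [hnbrT x hxT] at this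
      exact (Finset.mem_erase.mp this).2
  have hstep : ∀ a b : V, a ∈ T → (skeleton E).Adj a b → b ∈ T := by
    intro a b ha hab
    rw [skeleton, SimpleGraph.fromRel_adj] at hab
    obtain ⟨hne, h⟩ := hab
    rcases h with ⟨g, hg, hag, hbg⟩ | ⟨g, hg, hbg, hag⟩ <;>
      exact hedgeT g hg a hag ha hbg
  have haux : ∀ (a x : V) (p : (skeleton E).Walk a x), a ∈ T → x ∈ T := by
    intro a x p
    induction p with
    | nil => exact id
    | cons h _ ih => exact fun hu => ih (hstep _ _ hu h)
  have hST : S ⊆ T := by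
    intro x hxS
    obtain ⟨p⟩ := hconn v hv x hxS
    exact haux v x p (Finset.mem_insert_self v N)
  have hSeq : S = T := Finset.Subset.antisymm hST hTS
  exact hnotK5 ⟨by rw [hSeq]; exact hTcard,
    fun e hsub hcard => hkey e (hSeq ▸ hsub) hcard⟩
end

section
/- Let G be a 3-uniform hypergraph, let e be a 3-element non-edge, and suppose e contains a vertex v that is aggressively Berge-K_{1,ℓ}-saturated (of type I or type II). Then G + e contains a Berge-K_{1,ℓ}, i.e., some vertex of G + e has Berge degree at least ℓ. -/
open Finset

variable {V : Type} [DecidableEq V]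

/-- The link graph of `v`: graph on `N(v)` with `x ~ y` iff `{v,x,y} ∈ E`. -/
def linkGraph (E : Finset (Finset V)) (v : V) : SimpleGraph {x // x ∈ nbr E v} :=
  SimpleGraph.fromRel (fun a b => ({v, a.1, b.1} : Finset V) ∈ E)

/-- The number of connected components of the link graph of `v` that are trees. -/
noncomputable def treeCount (E : Finset (Finset V)) (v : V) : ℕ :=
  Nat.card {c : (linkGraph E v).ConnectedComponent //
    ((linkGraph E v).induce c.supp).IsTree}

/-- `x` lies in a tree component of the link graph `L(v)`. -/
def InTreeComp (E : Finset (Finset V)) (v : V) (x : {z // z ∈ nbr E v}) : Prop :=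
  ((linkGraph E v).induce ((linkGraph E v).connectedComponentMk x).supp).IsTree

/-- `v` is aggressively Berge-`K_{1,ℓ}`-saturated of type I: `d^B(v) = ℓ-1` and the
vertices of `L(v)` not lying in tree components form a clique in `L(v)`. -/
def TypeI (E : Finset (Finset V)) (ℓ : ℕ) (v : V) : Prop :=
  bergeDeg E v = ℓ - 1 ∧
  ∀ x y : {z // z ∈ nbr E v}, ¬ InTreeComp E v x → ¬ InTreeComp E v y → x ≠ y →
    (linkGraph E v).Adj x y

/-- `v` is aggressively Berge-`K_{1,ℓ}`-saturated of type II: not of type I,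
`d^B(v) = ℓ-1`, and any two distinct non-tree-component vertices `x, y` of `N(v)`
are adjacent in `L(v)` or one of them is of type I. -/
def TypeII (E : Finset (Finset V)) (ℓ : ℕ) (v : V) : Prop :=
  ¬ TypeI E ℓ v ∧ bergeDeg E v = ℓ - 1 ∧
  ∀ x y : {z // z ∈ nbr E v}, ¬ InTreeComp E v x → ¬ InTreeComp E v y → x ≠ y →
    ((linkGraph E v).Adj x y ∨ TypeI E ℓ x.1 ∨ TypeI E ℓ y.1)

/-! ### Auxiliary lemmas -/

set_option linter.unusedSectionVars false

lemma isBergeStar_zero (E : Finset (Finset V)) (v : V) : IsBergeStar E v 0 :=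
  ⟨Fin.elim0, Fin.elim0, fun i => i.elim0, fun i => i.elim0, fun i => i.elim0⟩

lemma isBergeStar_mono {E : Finset (Finset V)} {v : V} {m n : ℕ}
    (h : IsBergeStar E v n) (hmn : m ≤ n) : IsBergeStar E v m := by
  obtain ⟨y, f, hy, hf, hp⟩ := h
  exact ⟨y ∘ Fin.castLE hmn, f ∘ Fin.castLE hmn,
    hy.comp (Fin.castLE_injective hmn), hf.comp (Fin.castLE_injective hmn),
    fun i => hp _⟩

lemma isBergeStar_le_card {E : Finset (Finset V)} {v : V} {m : ℕ}
    (h : IsBergeStar E v m) : m ≤ E.card := by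
  obtain ⟨y, f, hy, hf, hp⟩ := h
  have : Function.Injective (fun i : Fin m => (⟨f i, (hp i).1⟩ : {x // x ∈ E})) := by
    intro i j hij
    exact hf (congrArg Subtype.val hij)
  simpa using Fintype.card_le_of_injective _ this

lemma bddAbove_star (E : Finset (Finset V)) (v : V) :
    BddAbove {m | IsBergeStar E v m} :=
  ⟨E.card, fun _ h => isBergeStar_le_card h⟩

lemma le_bergeDeg {E : Finset (Finset V)} {v : V} {m : ℕ}
    (h : IsBergeStar E v m) : m ≤ bergeDeg E v :=
  le_csSup (bddAbove_star E v) h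

lemma bergeDeg_spec (E : Finset (Finset V)) (v : V) :
    IsBergeStar E v (bergeDeg E v) :=
  Nat.sSup_mem ⟨0, by exact isBergeStar_zero E v⟩ (bddAbove_star E v)

lemma isBergeStar_of_fintype {E : Finset (Finset V)} {v : V}
    (ι : Type) [Fintype ι] (y : ι → V) (f : ι → Finset V)
    (hy : Function.Injective y) (hf : Function.Injective f)
    (hp : ∀ i, f i ∈ E ∧ v ∈ f i ∧ y i ∈ f i ∧ y i ≠ v) :
    IsBergeStar E v (Fintype.card ι) := by
  let e := (Fintype.equivFin ι).symm
  exact ⟨y ∘ e, f ∘ e, hy.comp e.injective, hf.comp e.injective, fun i => hp _⟩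

lemma leaf_mem_nbr {E : Finset (Finset V)} {v : V} {f : Finset V} {y : V}
    (hf : f ∈ E) (hv : v ∈ f) (hy : y ∈ f) (hyv : y ≠ v) : y ∈ nbr E v := by
  simp only [nbr, Finset.mem_erase, Finset.mem_biUnion, Finset.mem_filter, id]
  exact ⟨hyv, f, ⟨hf, hv⟩, hy⟩

lemma nbr_ne {E : Finset (Finset V)} {v : V} (z : {z // z ∈ nbr E v}) : z.1 ≠ v :=
  Finset.ne_of_mem_erase z.2

lemma link_adj_iff {E : Finset (Finset V)} {v : V} (x y : {z // z ∈ nbr E v}) :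
    (linkGraph E v).Adj x y ↔ x ≠ y ∧ ({v, x.1, y.1} : Finset V) ∈ E := by
  rw [linkGraph, SimpleGraph.fromRel_adj]
  have : ({v, y.1, x.1} : Finset V) = {v, x.1, y.1} := by
    rw [Finset.pair_comm y.1 x.1]
  rw [this]
  tauto

lemma hyperedge_decomp {E : Finset (Finset V)} (hU : Uniform3 E) {v : V} {f : Finset V}
    {y : V} (hf : f ∈ E) (hv : v ∈ f) (hy : y ∈ f) (hyv : y ≠ v) :
    ∃ z, z ≠ v ∧ z ≠ y ∧ f = {v, y, z} := by
  have h3 := hU f hf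
  have h2 : (f.erase v).card = 2 := by
    rw [Finset.card_erase_of_mem hv, h3]
  obtain ⟨a, b, hab, he⟩ := Finset.card_eq_two.mp h2
  have hy' : y ∈ f.erase v := Finset.mem_erase.mpr ⟨hyv, hy⟩
  rw [he] at hy'
  have hins : f = insert v (f.erase v) := (Finset.insert_erase hv).symm
  have hane : a ≠ v := Finset.ne_of_mem_erase (he ▸ (by simp : a ∈ ({a, b} : Finset V)))
  have hbne : b ≠ v := Finset.ne_of_mem_erase (he ▸ (by simp : b ∈ ({a, b} : Finset V)))
  rcases Finset.mem_insert.mp hy' with h | h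
  · subst h
    exact ⟨b, hbne, fun h => hab h.symm, by rw [hins, he]⟩
  · have h' : y = b := Finset.mem_singleton.mp h
    subst h'
    exact ⟨a, hane, hab, by rw [hins, he, Finset.pair_comm a y]⟩

/-- The key construction: if `e ∉ E` contains `v` and a vertex `a ≠ v` that is either
not a neighbour of `v` or lies in a tree component of the link graph of `v`, then
adding `e` increases the Berge degree of `v`. -/
lemma key_construction (E : Finset (Finset V)) (hU : Uniform3 E) (v : V)
    (e : Finset V) (heE : e ∉ E) (hve : v ∈ e) {a : V} (hae : a ∈ e) (hav : a ≠ v)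
    (hgood : a ∉ nbr E v ∨ ∃ h : a ∈ nbr E v, InTreeComp E v ⟨a, h⟩) :
    IsBergeStar (insert e E) v (bergeDeg E v + 1) := by
  classical
  set s := bergeDeg E v with hs
  obtain ⟨y, f, hyinj, hfinj, hp⟩ : IsBergeStar E v s := bergeDeg_spec E v
  have hynbr : ∀ i, y i ∈ nbr E v :=
    fun i => leaf_mem_nbr (hp i).1 (hp i).2.1 (hp i).2.2.1 (hp i).2.2.2
  rcases hgood with ha | ⟨ha, htree⟩
  · -- `a` is not a neighbour of `v`: extend the star directly
    let Y : Fin s ⊕ Unit → V := Sum.elim y (fun _ => a)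
    let F : Fin s ⊕ Unit → Finset V := Sum.elim f (fun _ => e)
    have hY : Function.Injective Y := by
      rintro (i | i) (j | j) h <;> simp only [Y, Sum.elim_inl, Sum.elim_inr] at h
      · exact congrArg Sum.inl (hyinj h)
      · exact absurd (h ▸ hynbr i) ha
      · exact absurd (h ▸ hynbr j) (h ▸ ha)
      · rfl
    have hF : Function.Injective F := by
      rintro (i | i) (j | j) h <;> simp only [F, Sum.elim_inl, Sum.elim_inr] at h
      · exact congrArg Sum.inl (hfinj h)
      · exact absurd (h ▸ (hp i).1) heE
      · exact absurd (h ▸ heE) (by simpa using (hp j).1)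
      · rfl
    have hstar := isBergeStar_of_fintype (E := insert e E) (v := v) _ Y F hY hF ?_
    · have hc : Fintype.card (Fin s ⊕ Unit) = s + 1 := by simp
      exact hc ▸ hstar
    · rintro (i | i)
      · exact ⟨Finset.mem_insert_of_mem (hp i).1, (hp i).2.1, (hp i).2.2.1, (hp i).2.2.2⟩
      · exact ⟨Finset.mem_insert_self _ _, hve, hae, hav⟩
  · -- `a` lies in a tree component
    set G := linkGraph E v with hG
    set a' : {z // z ∈ nbr E v} := ⟨a, ha⟩ with ha'
    set c := G.connectedComponentMk a' with hc
    set H := G.induce c.supp with hH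
    have htree' : H.IsTree := htree
    haveI : Fintype ↥c.supp := Fintype.ofFinite _
    haveI : Fintype ↥H.edgeSet := Fintype.ofFinite _
    have haa : a' ∈ c.supp := rfl
    set r : ↥c.supp := ⟨a', haa⟩ with hr
    have hconn : H.Connected := htree'.isConnected
    -- parent map decreasing distance to the root `r`
    have hstep : ∀ x : {x : ↥c.supp // x ≠ r}, ∃ w : ↥c.supp,
        H.Adj x.1 w ∧ H.dist w r < H.dist x.1 r := by
      rintro ⟨x, hx⟩
      show ∃ w : ↥c.supp, H.Adj x w ∧ H.dist w r < H.dist x r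
      obtain ⟨p, hplen⟩ := hconn.exists_walk_length_eq_dist x r
      have hnil : ¬ p.Nil := SimpleGraph.Walk.not_nil_of_ne hx
      refine ⟨p.getVert 1, p.adj_snd hnil, ?_⟩
      have h1 : H.dist (p.getVert 1) r ≤ p.tail.length := SimpleGraph.dist_le _
      have h2 := SimpleGraph.Walk.length_tail_add_one hnil
      omega
    choose P hP1 hP2 using hstep
    -- the hyperedges generated by the parent map
    have hPE : ∀ x : {x : ↥c.supp // x ≠ r},
        ({v, x.1.1.1, (P x).1.1} : Finset V) ∈ E := by
      intro x
      have hadj : G.Adj x.1.1 (P x).1 := by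
        have := hP1 x
        rw [hH] at this
        simpa using this
      exact ((link_adj_iff _ _).mp hadj).2
    -- the index type of the new star
    let I₁ := {i : Fin s // (⟨y i, hynbr i⟩ : {z // z ∈ nbr E v}) ∉ c.supp}
    let I₂ := {x : ↥c.supp // x ≠ r}
    let Y : I₁ ⊕ I₂ ⊕ Unit → V :=
      Sum.elim (fun i => y i.1) (Sum.elim (fun x => x.1.1.1) (fun _ => a))
    let F : I₁ ⊕ I₂ ⊕ Unit → Finset V :=
      Sum.elim (fun i => f i.1) (Sum.elim (fun x => {v, x.1.1.1, (P x).1.1}) (fun _ => e))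
    have hY : Function.Injective Y := by
      rintro (i | x | u) (j | x' | u') h <;>
        simp only [Y, Sum.elim_inl, Sum.elim_inr] at h
      · exact congrArg Sum.inl (Subtype.ext (hyinj h))
      · exfalso
        have : (⟨y i.1, hynbr i.1⟩ : {z // z ∈ nbr E v}) = x'.1.1 := Subtype.ext h
        exact i.2 (this ▸ x'.1.2)
      · exfalso
        have : (⟨y i.1, hynbr i.1⟩ : {z // z ∈ nbr E v}) = a' := Subtype.ext h
        exact i.2 (this ▸ haa)
      · exfalso
        have : (⟨y j.1, hynbr j.1⟩ : {z // z ∈ nbr E v}) = x.1.1 := Subtype.ext h.symm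
        exact j.2 (this ▸ x.1.2)
      · exact congrArg (Sum.inr ∘ Sum.inl) (Subtype.ext (Subtype.ext (Subtype.ext h)))
      · exfalso
        have hx : x.1 = r := Subtype.ext (Subtype.ext h)
        exact x.2 hx
      · exfalso
        have : (⟨y j.1, hynbr j.1⟩ : {z // z ∈ nbr E v}) = a' := Subtype.ext h.symm
        exact j.2 (this ▸ haa)
      · exfalso
        have hx : x'.1 = r := Subtype.ext (Subtype.ext h.symm)
        exact x'.2 hx
      · exact congrArg (Sum.inr ∘ Sum.inr) (Subsingleton.elim u u')
    have hyin : ∀ (i : Fin s) (x : I₂), f i = {v, x.1.1.1, (P x).1.1} →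
        (⟨y i, hynbr i⟩ : {z // z ∈ nbr E v}) ∈ c.supp := by
      intro i x hfi
      have hyi : y i ∈ ({v, x.1.1.1, (P x).1.1} : Finset V) := hfi ▸ (hp i).2.2.1
      simp only [Finset.mem_insert, Finset.mem_singleton] at hyi
      rcases hyi with h | h | h
      · exact absurd h (hp i).2.2.2
      · have : (⟨y i, hynbr i⟩ : {z // z ∈ nbr E v}) = x.1.1 := Subtype.ext h
        exact this ▸ x.1.2
      · have : (⟨y i, hynbr i⟩ : {z // z ∈ nbr E v}) = (P x).1 := Subtype.ext h
        exact this ▸ (P x).2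
    have hF : Function.Injective F := by
      rintro (i | x | u) (j | x' | u') h <;>
        simp only [F, Sum.elim_inl, Sum.elim_inr] at h
      · exact congrArg Sum.inl (Subtype.ext (hfinj h))
      · exact absurd (hyin i.1 x' h) i.2
      · exact absurd (h ▸ (hp i.1).1) heE
      · exact absurd (hyin j.1 x h.symm) j.2
      · -- two parent edges coincide
        by_cases hxx : x = x'
        · exact congrArg (Sum.inr ∘ Sum.inl) hxx
        exfalso
        have hxv : x.1.1.1 ≠ v := nbr_ne x.1.1
        have hx'v : x'.1.1.1 ≠ v := nbr_ne x'.1.1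
        have hxne : x.1.1.1 ≠ x'.1.1.1 := by
          intro hh
          exact hxx (Subtype.ext (Subtype.ext (Subtype.ext hh)))
        have hm1 : x.1.1.1 ∈ ({v, x'.1.1.1, (P x').1.1} : Finset V) := h ▸ (by simp)
        have hm2 : x'.1.1.1 ∈ ({v, x.1.1.1, (P x).1.1} : Finset V) := h ▸ (by simp)
        simp only [Finset.mem_insert, Finset.mem_singleton] at hm1 hm2
        have h1 : x.1.1.1 = (P x').1.1 := by tauto
        have h2 : x'.1.1.1 = (P x).1.1 := by tauto
        have e1 : P x' = x.1 := Subtype.ext (Subtype.ext h1.symm)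
        have e2 : P x = x'.1 := Subtype.ext (Subtype.ext h2.symm)
        have d1 := hP2 x
        have d2 := hP2 x'
        rw [e1] at d2
        rw [e2] at d1
        omega
      · exact absurd (h ▸ hPE x) heE
      · exact absurd (h.symm ▸ (hp j.1).1) heE
      · exact absurd (h.symm ▸ hPE x') heE
      · exact congrArg (Sum.inr ∘ Sum.inr) (Subsingleton.elim u u')
    have hprops : ∀ i, F i ∈ insert e E ∧ v ∈ F i ∧ Y i ∈ F i ∧ Y i ≠ v := by
      rintro (i | x | u)
      · exact ⟨Finset.mem_insert_of_mem (hp i.1).1, (hp i.1).2.1,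
          (hp i.1).2.2.1, (hp i.1).2.2.2⟩
      · exact ⟨Finset.mem_insert_of_mem (hPE x), by simp [F, Y],
          by simp [F, Y], nbr_ne x.1.1⟩
      · exact ⟨Finset.mem_insert_self _ _, hve, hae, hav⟩
    have hstar := isBergeStar_of_fintype (E := insert e E) (v := v) _ Y F hY hF hprops
    refine isBergeStar_mono hstar ?_
    -- cardinality computation
    have hcard : Fintype.card (I₁ ⊕ I₂ ⊕ Unit) =
        Fintype.card I₁ + Fintype.card I₂ + 1 := by
      simp [Fintype.card_sum, add_assoc]
    have hI2 : Fintype.card I₂ = Fintype.card ↥c.supp - 1 := by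
      have h1 : Fintype.card {x : ↥c.supp // x = r} = 1 := Fintype.card_subtype_eq r
      have h2 := Fintype.card_subtype_compl (fun x : ↥c.supp => x = r)
      have h3 : Fintype.card I₂ =
          Fintype.card {x : ↥c.supp // ¬ x = r} := Fintype.card_congr (Equiv.refl _)
      omega
    have hpos : 1 ≤ Fintype.card ↥c.supp := by
      have : Nonempty ↥c.supp := ⟨r⟩
      exact Fintype.card_pos
    -- the tree component has `card - 1` edges
    have hedges : Fintype.card ↥H.edgeSet + 1 = Fintype.card ↥c.supp := by
      have := htree'.card_edgeFinset
      rwa [SimpleGraph.edgeFinset_card] at this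
    -- star edges with leaf in the component inject into the edges of the tree
    have hk : Fintype.card {i : Fin s // (⟨y i, hynbr i⟩ : {z // z ∈ nbr E v}) ∈ c.supp}
        ≤ Fintype.card ↥H.edgeSet := by
      have hz : ∀ i : {i : Fin s // (⟨y i, hynbr i⟩ : {z // z ∈ nbr E v}) ∈ c.supp},
          ∃ z, z ≠ v ∧ z ≠ y i.1 ∧ f i.1 = {v, y i.1, z} :=
        fun i => hyperedge_decomp hU (hp i.1).1 (hp i.1).2.1 (hp i.1).2.2.1 (hp i.1).2.2.2
      choose z hzv hzy hzf using hz
      have hznbr : ∀ i, z i ∈ nbr E v := by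
        intro i
        refine leaf_mem_nbr (hp i.1).1 (hp i.1).2.1 ?_ (hzv i)
        rw [hzf i]; simp
      have hadj : ∀ i, G.Adj ⟨y i.1, hynbr i.1⟩ ⟨z i, hznbr i⟩ := by
        intro i
        rw [link_adj_iff]
        constructor
        · intro hh
          exact (hzy i) (congrArg Subtype.val hh).symm
        · rw [← hzf i]; exact (hp i.1).1
      have hzsupp : ∀ i, (⟨z i, hznbr i⟩ : {z // z ∈ nbr E v}) ∈ c.supp := by
        intro i
        have h1 : G.connectedComponentMk ⟨y i.1, hynbr i.1⟩ = c := i.2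
        have h2 : G.connectedComponentMk ⟨z i, hznbr i⟩ =
            G.connectedComponentMk ⟨y i.1, hynbr i.1⟩ :=
          SimpleGraph.ConnectedComponent.eq.mpr (hadj i).symm.reachable
        exact h2.trans h1
      have hHadj : ∀ i, H.Adj ⟨⟨y i.1, hynbr i.1⟩, i.2⟩ ⟨⟨z i, hznbr i⟩, hzsupp i⟩ := by
        intro i
        rw [hH]
        simpa using hadj i
      let φ : {i : Fin s // (⟨y i, hynbr i⟩ : {z // z ∈ nbr E v}) ∈ c.supp} → ↥H.edgeSet :=
        fun i => ⟨s(⟨⟨y i.1, hynbr i.1⟩, i.2⟩, ⟨⟨z i, hznbr i⟩, hzsupp i⟩),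
          (SimpleGraph.mem_edgeSet H).mpr (hHadj i)⟩
      have hφ : Function.Injective φ := by
        intro i j hij
        have h' := congrArg Subtype.val hij
        simp only [φ, Sym2.eq, Sym2.rel_iff', Prod.mk.injEq, Prod.swap_prod_mk] at h'
        have hij' : i.1 = j.1 := by
          rcases h' with ⟨h1, h2⟩ | ⟨h1, h2⟩
          · exact hyinj (congrArg (Subtype.val ∘ Subtype.val) h1)
          · -- crossed case: the hyperedges coincide
            have hy1 : y i.1 = z j := congrArg (Subtype.val ∘ Subtype.val) h1
            have hz1 : z i = y j.1 := congrArg (Subtype.val ∘ Subtype.val) h2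
            apply hfinj
            rw [hzf i, hzf j, hy1, hz1, Finset.pair_comm]
        exact Subtype.ext hij'
      exact Fintype.card_le_of_injective φ hφ
    have hsplit : Fintype.card
          {i : Fin s // (⟨y i, hynbr i⟩ : {z // z ∈ nbr E v}) ∈ c.supp} +
        Fintype.card I₁ = s := by
      have h4 := Fintype.card_subtype_compl
        (fun i : Fin s => (⟨y i, hynbr i⟩ : {z // z ∈ nbr E v}) ∈ c.supp)
      have h5 : Fintype.card I₁ = Fintype.card {i : Fin s //
          ¬ (⟨y i, hynbr i⟩ : {z // z ∈ nbr E v}) ∈ c.supp} := Fintype.card_congr (Equiv.refl _)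
      have hle : Fintype.card {i : Fin s //
          (⟨y i, hynbr i⟩ : {z // z ∈ nbr E v}) ∈ c.supp} ≤ s := by
        have := Fintype.card_le_of_injective
          (fun i : {i : Fin s // (⟨y i, hynbr i⟩ : {z // z ∈ nbr E v}) ∈ c.supp} => i.1)
          (fun i j h => Subtype.ext h)
        simpa using this
      simp only [Fintype.card_fin] at h4
      omega
    omega

lemma good_step (E : Finset (Finset V)) (hU : Uniform3 E) (v : V)
    (e : Finset V) (heE : e ∉ E) (hve : v ∈ e) {a : V} (hae : a ∈ e) (hav : a ≠ v)
    {ℓ : ℕ} (hdeg : bergeDeg E v = ℓ - 1)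
    (hgood : a ∉ nbr E v ∨ ∃ h : a ∈ nbr E v, InTreeComp E v ⟨a, h⟩) :
    ℓ ≤ bergeDeg (insert e E) v := by
  have h := le_bergeDeg (key_construction E hU v e heE hve hae hav hgood)
  omega

lemma typeI_main (E : Finset (Finset V)) (hU : Uniform3 E) (e : Finset V) (heE : e ∉ E)
    {v a b : V} (hve : v ∈ e) (hae : a ∈ e) (hbe : b ∈ e)
    (hav : a ≠ v) (hbv : b ≠ v) (hab : a ≠ b) (hef : e = {v, a, b})
    {ℓ : ℕ} (hI : TypeI E ℓ v) :
    ℓ ≤ bergeDeg (insert e E) v := by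
  by_cases hga : a ∉ nbr E v ∨ ∃ h : a ∈ nbr E v, InTreeComp E v ⟨a, h⟩
  · exact good_step E hU v e heE hve hae hav hI.1 hga
  by_cases hgb : b ∉ nbr E v ∨ ∃ h : b ∈ nbr E v, InTreeComp E v ⟨b, h⟩
  · exact good_step E hU v e heE hve hbe hbv hI.1 hgb
  exfalso
  push_neg at hga hgb
  obtain ⟨ha, hta⟩ := hga
  obtain ⟨hb, htb⟩ := hgb
  have hadj := hI.2 ⟨a, ha⟩ ⟨b, hb⟩ (hta ha) (htb hb)
    (fun h => hab (congrArg Subtype.val h))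
  have hmem := ((link_adj_iff _ _).mp hadj).2
  rw [← hef] at hmem
  exact heE hmem

theorem stmt16 (E : Finset (Finset V)) (ℓ : ℕ) (hU : Uniform3 E)
    (e : Finset V) (he3 : e.card = 3) (heE : e ∉ E)
    (v : V) (hv : v ∈ e) (hagg : TypeI E ℓ v ∨ TypeII E ℓ v) :
    ∃ w : V, ℓ ≤ bergeDeg (insert e E) w := by
  have h2 : (e.erase v).card = 2 := by rw [Finset.card_erase_of_mem hv, he3]
  obtain ⟨a, b, hab, herase⟩ := Finset.card_eq_two.mp h2
  have hef : e = {v, a, b} := by rw [← Finset.insert_erase hv, herase]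
  have hav : a ≠ v := Finset.ne_of_mem_erase (herase ▸ (by simp : a ∈ ({a, b} : Finset V)))
  have hbv : b ≠ v := Finset.ne_of_mem_erase (herase ▸ (by simp : b ∈ ({a, b} : Finset V)))
  have hae : a ∈ e := by rw [hef]; simp
  have hbe : b ∈ e := by rw [hef]; simp
  rcases hagg with hI | ⟨_, hdeg, hcl⟩
  · exact ⟨v, typeI_main E hU e heE hv hae hbe hav hbv hab hef hI⟩
  · by_cases hga : a ∉ nbr E v ∨ ∃ h : a ∈ nbr E v, InTreeComp E v ⟨a, h⟩
    · exact ⟨v, good_step E hU v e heE hv hae hav hdeg hga⟩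
    by_cases hgb : b ∉ nbr E v ∨ ∃ h : b ∈ nbr E v, InTreeComp E v ⟨b, h⟩
    · exact ⟨v, good_step E hU v e heE hv hbe hbv hdeg hgb⟩
    push_neg at hga hgb
    obtain ⟨ha, hta⟩ := hga
    obtain ⟨hb, htb⟩ := hgb
    rcases hcl ⟨a, ha⟩ ⟨b, hb⟩ (hta ha) (htb hb)
        (fun h => hab (congrArg Subtype.val h)) with hadj | hIa | hIb
    · exfalso
      have hmem := ((link_adj_iff _ _).mp hadj).2
      rw [← hef] at hmem
      exact heE hmem
    · refine ⟨a, typeI_main E hU e heE hae hv hbe hav.symm hab.symm hbv.symm ?_ hIa⟩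
      rw [hef, Finset.insert_comm]
    · refine ⟨b, typeI_main E hU e heE hbe hv hae hbv.symm hab (fun h => hav h.symm) ?_ hIb⟩
      rw [hef]
      ext x
      simp only [Finset.mem_insert, Finset.mem_singleton]
      tauto
end
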